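/- arXiv:2405.18159 — 2 statements merged into one kernel-verified Lean document; each statement's English description precedes it below -/
import Mathlib

section
/- Let A be a symmetric positive definite real n×n matrix and define |ξ|_A := √(Aξ·ξ). For all real p with 1 < p < ∞, there exist positive constants c(p), C(p) such that for all ξ, η ∈ ℝⁿ, c(p)·|η|_A²·(|η|_A+|ξ|_A)^{p-2} ≤ |ξ+η|_A^p − |ξ|_A^p − p·|ξ|^{p-2}·(Aξ·η) ≤ C(p)·|η|_A²·(|η|_A+|ξ|_A)^{p-2}. -/
open Real Set

section Helpers

lemma B1 {θ x y : ℝ} (hθ : 1 ≤ θ) (hx : 0 ≤ x) (hy : 0 < y) :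
    y ^ θ + θ * y ^ (θ - 1) * (x - y) ≤ x ^ θ := by
  have hs : (-1:ℝ) ≤ x / y - 1 := by
    have : 0 ≤ x / y := div_nonneg hx hy.le
    linarith
  have hb := one_add_mul_self_le_rpow_one_add hs hθ
  have h1 : (1 + (x / y - 1)) = x / y := by ring
  rw [h1] at hb
  have hyp : 0 < y ^ θ := rpow_pos_of_pos hy θ
  have h2 : (x / y) ^ θ = x ^ θ / y ^ θ := div_rpow hx hy.le θ
  rw [h2] at hb
  have h3 : y ^ θ * (1 + θ * (x / y - 1)) ≤ x ^ θ := by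
    calc y ^ θ * (1 + θ * (x / y - 1)) ≤ y ^ θ * (x ^ θ / y ^ θ) := by
              exact mul_le_mul_of_nonneg_left hb hyp.le
    _ = x ^ θ := by field_simp
  calc y ^ θ + θ * y ^ (θ - 1) * (x - y)
      = y ^ θ * (1 + θ * (x / y - 1)) := by
        rw [rpow_sub hy, rpow_one]
        field_simp
    _ ≤ x ^ θ := h3

lemma B2 {θ x y : ℝ} (hθ0 : 0 < θ) (hθ1 : θ ≤ 1) (hx : 0 ≤ x) (hy : 0 < y) :
    x ^ θ ≤ y ^ θ + θ * y ^ (θ - 1) * (x - y) := by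
  have hs : (-1:ℝ) ≤ x / y - 1 := by
    have : 0 ≤ x / y := div_nonneg hx hy.le
    linarith
  have hb := rpow_one_add_le_one_add_mul_self hs hθ0.le hθ1
  have h1 : (1 + (x / y - 1)) = x / y := by ring
  rw [h1] at hb
  have hyp : 0 < y ^ θ := rpow_pos_of_pos hy θ
  have h2 : (x / y) ^ θ = x ^ θ / y ^ θ := div_rpow hx hy.le θ
  rw [h2] at hb
  have h3 : x ^ θ ≤ y ^ θ * (1 + θ * (x / y - 1)) := by
    calc x ^ θ = y ^ θ * (x ^ θ / y ^ θ) := by field_simp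
    _ ≤ y ^ θ * (1 + θ * (x / y - 1)) := mul_le_mul_of_nonneg_left hb hyp.le
  calc x ^ θ ≤ y ^ θ * (1 + θ * (x / y - 1)) := h3
    _ = y ^ θ + θ * y ^ (θ - 1) * (x - y) := by
        rw [rpow_sub hy, rpow_one]
        field_simp

lemma sq_rpow {x : ℝ} (hx : 0 ≤ x) (θ : ℝ) : (x ^ 2) ^ θ = x ^ (2 * θ) := by
  rw [← Real.rpow_natCast x 2, ← Real.rpow_mul hx]
  norm_num

lemma mvt_rpow {p u v : ℝ} (hp : 1 < p) (hu : 0 ≤ u) (huv : u < v) :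
    ∃ ξ ∈ Set.Ioo u v, v ^ p - u ^ p = p * ξ ^ (p - 1) * (v - u) := by
  have hcont : ContinuousOn (fun x : ℝ => x ^ p) (Set.Icc u v) := fun x _ =>
    (Real.continuousAt_rpow_const x p (Or.inr (by linarith))).continuousWithinAt
  have hderiv : ∀ x ∈ Set.Ioo u v, HasDerivAt (fun x : ℝ => x ^ p) (p * x ^ (p - 1)) x := by
    intro x hx
    exact Real.hasDerivAt_rpow_const (Or.inl (by have := hx.1; nlinarith [hu]))
  obtain ⟨ξ, hξ, h⟩ := exists_hasDerivAt_eq_slope (fun x : ℝ => x ^ p)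
    (fun x => p * x ^ (p - 1)) huv hcont hderiv
  refine ⟨ξ, hξ, ?_⟩
  rw [h, div_mul_eq_mul_div, mul_div_assoc, div_self (by linarith : v - u ≠ 0), mul_one]

lemma H2 {p a m : ℝ} (hp : 1 < p) (ha : 0 ≤ a) (hm : 0 < m) (h2am : 2*a ≤ m) :
    min ((3/4:ℝ)^p - (1/4:ℝ)^p) (p * (4:ℝ)^(1-p)) * m^p
      ≤ (m-a)^p - a^p + p*a^(p-1)*m := by
  have hp0 : (0:ℝ) < p := by linarith
  have hmp : (0:ℝ) ≤ m^p := rpow_nonneg hm.le p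
  rcases le_or_gt (4*a) m with h4 | h4
  · have h1 : ((3/4:ℝ)*m)^p ≤ (m-a)^p := rpow_le_rpow (by positivity) (by linarith) hp0.le
    have h2 : a^p ≤ ((1/4:ℝ)*m)^p := rpow_le_rpow ha (by linarith) hp0.le
    rw [mul_rpow (by norm_num) hm.le] at h1 h2
    have h5 : (0:ℝ) ≤ p*a^(p-1)*m := by positivity
    have hmin : min ((3/4:ℝ)^p - (1/4:ℝ)^p) (p * (4:ℝ)^(1-p)) ≤ (3/4:ℝ)^p - (1/4:ℝ)^p :=
      min_le_left _ _
    have := mul_le_mul_of_nonneg_right hmin hmp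
    nlinarith
  · have hk : ((1/4:ℝ)*m)^(p-1) ≤ a^(p-1) := rpow_le_rpow (by positivity) (by linarith) (by linarith)
    rw [mul_rpow (by norm_num) hm.le] at hk
    have e1 : ((1/4:ℝ))^(p-1) = (4:ℝ)^(1-p) := by
      rw [show (1/4:ℝ) = 4⁻¹ by norm_num, ← Real.rpow_neg_one (4:ℝ),
        ← Real.rpow_mul (by norm_num)]
      ring_nf
    have e2 : m^(p-1)*m = m^p := by
      rw [← Real.rpow_add_one hm.ne' (p-1)]; ring_nf
    have aineq : a^p ≤ (m-a)^p := rpow_le_rpow ha (by linarith) hp0.le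
    have hmin : min ((3/4:ℝ)^p - (1/4:ℝ)^p) (p * (4:ℝ)^(1-p)) ≤ p * (4:ℝ)^(1-p) :=
      min_le_right _ _
    have h6 := mul_le_mul_of_nonneg_right hmin hmp
    have h7 : p * (4:ℝ)^(1-p) * m^p = p * ((1/4:ℝ)^(p-1) * m^(p-1)) * m := by
      rw [e1, ← e2]; ring
    have h8 : p * ((1/4:ℝ)^(p-1) * m^(p-1)) * m ≤ p * a^(p-1) * m := by
      have := mul_le_mul_of_nonneg_left hk hp0.le
      exact mul_le_mul_of_nonneg_right this hm.le
    nlinarith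

lemma lower_ge2 {p a m s b : ℝ} (hp : 2 ≤ p) (ha : 0 < a) (hm : 0 < m)
    (hs : |s| ≤ a*m) (hb : 0 ≤ b) (hb2 : b^2 = a^2+2*s+m^2) :
    min ((p/2) * (3:ℝ)^(2-p))
        (min ((3/4:ℝ)^p - (1/4:ℝ)^p) (p * (4:ℝ)^(1-p)) * (2/3:ℝ)^(p-2))
      * (m^2*(m+a)^(p-2)) ≤ b^p - a^p - p*a^(p-2)*s := by
  have hp1 : (1:ℝ) < p := by linarith
  have habs := abs_le.mp hs
  have hX : (0:ℝ) ≤ m^2*(m+a)^(p-2) := by positivity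
  have hbp : b^p = (a^2+2*s+m^2)^(p/2) := by
    rw [← hb2, sq_rpow hb, show 2*(p/2) = p by ring]
  have hQ : (0:ℝ) ≤ a^2+2*s+m^2 := by rw [← hb2]; positivity
  have ean : a^(p-2)*a = a^(p-1) := by
    rw [← Real.rpow_add_one ha.ne' (p-2)]; ring_nf
  rcases le_or_gt m (2*a) with hc | hc
  · -- m ≤ 2a
    have key := B1 (θ := p/2) (x := a^2+2*s+m^2) (y := a^2) (by linarith) hQ (by positivity)
    rw [sq_rpow ha.le (p/2), sq_rpow ha.le (p/2-1), show 2*(p/2) = p by ring,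
      show 2*(p/2-1) = p-2 by ring] at key
    have hD : (p/2)*a^(p-2)*m^2 ≤ b^p - a^p - p*a^(p-2)*s := by
      rw [hbp]; nlinarith [key]
    have hmono : (m+a)^(p-2) ≤ (3:ℝ)^(p-2)*a^(p-2) := by
      rw [← mul_rpow (by norm_num) ha.le]
      exact rpow_le_rpow (by positivity) (by linarith) (by linarith)
    have e3 : (3:ℝ)^(2-p)*(3:ℝ)^(p-2) = 1 := by
      rw [← Real.rpow_add (by norm_num)]; norm_num
    have hmin : min ((p/2) * (3:ℝ)^(2-p))
        (min ((3/4:ℝ)^p - (1/4:ℝ)^p) (p * (4:ℝ)^(1-p)) * (2/3:ℝ)^(p-2))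
        ≤ (p/2) * (3:ℝ)^(2-p) := min_le_left _ _
    refine le_trans (mul_le_mul_of_nonneg_right hmin hX) (le_trans ?_ hD)
    calc ((p/2) * (3:ℝ)^(2-p)) * (m^2*(m+a)^(p-2))
        ≤ ((p/2) * (3:ℝ)^(2-p)) * (m^2*((3:ℝ)^(p-2)*a^(p-2))) := by
          apply mul_le_mul_of_nonneg_left _ (by positivity)
          exact mul_le_mul_of_nonneg_left hmono (by positivity)
      _ = (p/2)*a^(p-2)*m^2 * ((3:ℝ)^(2-p)*(3:ℝ)^(p-2)) := by ring
      _ = (p/2)*a^(p-2)*m^2 := by rw [e3, mul_one]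
  · -- 2a < m
    have hma : (0:ℝ) < m - a := by linarith
    have key := B1 (θ := p/2) (x := a^2+2*s+m^2) (y := (m-a)^2) (by linarith) hQ (by positivity)
    rw [sq_rpow hma.le (p/2), sq_rpow hma.le (p/2-1), show 2*(p/2) = p by ring,
      show 2*(p/2-1) = p-2 by ring] at key
    have hmono : a^(p-2) ≤ (m-a)^(p-2) := rpow_le_rpow ha.le (by linarith) (by linarith)
    have hsam : (0:ℝ) ≤ s + a*m := by linarith
    have h9 : p * (a^(p-2)*(s+a*m)) ≤ p * ((m-a)^(p-2)*(s+a*m)) :=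
      mul_le_mul_of_nonneg_left (mul_le_mul_of_nonneg_right hmono hsam) (by linarith)
    have hD : (m-a)^p - a^p + p*a^(p-1)*m ≤ b^p - a^p - p*a^(p-2)*s := by
      have e5 : p*(a^(p-2)*(s+a*m)) = p*a^(p-2)*s + p*a^(p-1)*m := by rw [← ean]; ring
      rw [hbp]; nlinarith [key, h9, e5]
    have hh2 := H2 hp1 ha.le hm (by linarith)
    have em : m^(p-2)*m^2 = m^p := by
      rw [← Real.rpow_natCast m 2, ← Real.rpow_add hm]; ring_nf
    have hmono2 : (m+a)^(p-2) ≤ (3/2:ℝ)^(p-2)*m^(p-2) := by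
      rw [← mul_rpow (by norm_num) hm.le]
      exact rpow_le_rpow (by positivity) (by linarith) (by linarith)
    have e4 : (2/3:ℝ)^(p-2)*(3/2:ℝ)^(p-2) = 1 := by
      rw [← mul_rpow (by norm_num) (by norm_num)]; norm_num
    have hmn : (0:ℝ) ≤ min ((3/4:ℝ)^p - (1/4:ℝ)^p) (p * (4:ℝ)^(1-p)) := by
      apply le_min
      · have : (1/4:ℝ)^p ≤ (3/4:ℝ)^p := rpow_le_rpow (by norm_num) (by norm_num) (by linarith)
        linarith
      · positivity
    have hmin : min ((p/2) * (3:ℝ)^(2-p))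
        (min ((3/4:ℝ)^p - (1/4:ℝ)^p) (p * (4:ℝ)^(1-p)) * (2/3:ℝ)^(p-2))
        ≤ min ((3/4:ℝ)^p - (1/4:ℝ)^p) (p * (4:ℝ)^(1-p)) * (2/3:ℝ)^(p-2) := min_le_right _ _
    set mn := min ((3/4:ℝ)^p - (1/4:ℝ)^p) (p * (4:ℝ)^(1-p)) with hmndef
    refine le_trans (mul_le_mul_of_nonneg_right hmin hX) (le_trans ?_ (le_trans hh2 hD))
    calc (mn * (2/3:ℝ)^(p-2)) * (m^2*(m+a)^(p-2))
        ≤ (mn * (2/3:ℝ)^(p-2)) * (m^2*((3/2:ℝ)^(p-2)*m^(p-2))) := by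
          apply mul_le_mul_of_nonneg_left _ (by positivity)
          exact mul_le_mul_of_nonneg_left hmono2 (by positivity)
      _ = mn * (m^(p-2)*m^2) * ((2/3:ℝ)^(p-2)*(3/2:ℝ)^(p-2)) := by ring
      _ = mn * m^p := by rw [e4, em, mul_one]

set_option maxHeartbeats 1000000 in
lemma upper_ge2 {p a m s b : ℝ} (hp : 2 ≤ p) (ha : 0 < a) (hm : 0 < m)
    (hs : |s| ≤ a*m) (hb : 0 ≤ b) (hb2 : b^2 = a^2+2*s+m^2) :
    b^p - a^p - p*a^(p-2)*s ≤ (p*(p-1) + (2:ℝ)^p + (1+p)) * (m^2*(m+a)^(p-2)) := by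
  have hp1 : (1:ℝ) < p := by linarith
  have habs := abs_le.mp hs
  rw [add_comm m a]
  have hX : (0:ℝ) ≤ m^2*(a+m)^(p-2) := by positivity
  have hbp : b^p = (a^2+2*s+m^2)^(p/2) := by
    rw [← hb2, sq_rpow hb, show 2*(p/2) = p by ring]
  have ham : (0:ℝ) < a*m := by positivity
  have ean : a^(p-2)*a = a^(p-1) := by
    rw [← Real.rpow_add_one ha.ne' (p-2)]; ring_nf
  have em : m^(p-2)*m^2 = m^p := by
    rw [← Real.rpow_natCast m 2, ← Real.rpow_add hm]; ring_nf
  have hCa : (0:ℝ) ≤ (2:ℝ)^p + (1+p) := by positivity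
  have hCb : (0:ℝ) ≤ p*(p-1) + (1+p) := by nlinarith
  have hCc : (0:ℝ) ≤ p*(p-1) + (2:ℝ)^p := by
    have : (0:ℝ) ≤ (2:ℝ)^p := by positivity
    nlinarith
  -- bound for Ψ
  have hΨb : ((a-m)^2)^(p/2) - a^p + p*a^(p-1)*m
      ≤ (p*(p-1) + (2:ℝ)^p + (1+p)) * (m^2*(a+m)^(p-2)) := by
    rcases le_or_gt m a with hc | hc
    · have e2 : ((a-m)^2)^(p/2) = (a-m)^p := by
        rw [sq_rpow (by linarith) (p/2), show 2*(p/2) = p by ring]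
      obtain ⟨ξ, hξ, hmvt⟩ := mvt_rpow hp1 (show (0:ℝ) ≤ a - m by linarith)
        (show a - m < a by linarith)
      obtain ⟨hξ1, hξ2⟩ := hξ
      have hξ0 : 0 < ξ := by linarith
      have hB := B1 (θ := p-1) (x := ξ) (y := a) (by linarith) hξ0.le ha
      rw [show p-1-1 = p-2 by ring] at hB
      have hmono : a^(p-2) ≤ (a+m)^(p-2) := rpow_le_rpow ha.le (by linarith) (by linarith)
      have h4 : a^(p-2)*(a-ξ) ≤ (a+m)^(p-2)*m :=
        mul_le_mul hmono (by linarith) (by linarith) (by positivity)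
      have hfact : p*m*(a^(p-1) - ξ^(p-1)) ≤ p*m*((p-1)*(a^(p-2)*(a-ξ))) := by
        apply mul_le_mul_of_nonneg_left _ (by positivity)
        nlinarith [hB]
      have h3'' : p*m*((p-1)*(a^(p-2)*(a-ξ))) ≤ p*m*((p-1)*((a+m)^(p-2)*m)) := by
        apply mul_le_mul_of_nonneg_left _ (by positivity)
        apply mul_le_mul_of_nonneg_left h4 (by linarith)
      rw [e2]
      have hgoal : (a-m)^p - a^p + p*a^(p-1)*m ≤ p*(p-1)*(m^2*(a+m)^(p-2)) := by
        nlinarith [hmvt, hfact, h3'']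
      have h5 : (0:ℝ) ≤ ((2:ℝ)^p + (1+p)) * (m^2*(a+m)^(p-2)) := mul_nonneg hCa hX
      nlinarith [hgoal, h5]
    · have e2 : ((a-m)^2)^(p/2) = (m-a)^p := by
        rw [show (a-m)^2 = (m-a)^2 by ring, sq_rpow (by linarith) (p/2),
          show 2*(p/2) = p by ring]
      have h5 : (m-a)^p ≤ m^p := rpow_le_rpow (by linarith) (by linarith) (by linarith)
      have h6 : a^(p-1) ≤ m^(p-1) := rpow_le_rpow ha.le hc.le (by linarith)
      have h7 : m^(p-2) ≤ (a+m)^(p-2) := rpow_le_rpow hm.le (by linarith) (by linarith)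
      have h8 : p*a^(p-1)*m ≤ p*m^(p-1)*m := by
        apply mul_le_mul_of_nonneg_right _ hm.le
        exact mul_le_mul_of_nonneg_left h6 (by linarith)
      have e9 : m^(p-1)*m = m^p := by
        rw [← Real.rpow_add_one hm.ne' (p-1)]; ring_nf
      have h10 : m^p ≤ m^2*(a+m)^(p-2) := by
        rw [← em]
        calc m^(p-2)*m^2 ≤ (a+m)^(p-2)*m^2 := mul_le_mul_of_nonneg_right h7 (by positivity)
          _ = m^2*(a+m)^(p-2) := by ring
      have hap : (0:ℝ) ≤ a^p := by positivity
      rw [e2]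
      have hgoal : (m-a)^p - a^p + p*a^(p-1)*m ≤ (1+p)*(m^2*(a+m)^(p-2)) := by
        nlinarith [h5, h8, h10, e9, hp1, mul_le_mul_of_nonneg_left h10 (by linarith : (0:ℝ) ≤ p)]
      have h11 : (0:ℝ) ≤ (p*(p-1) + (2:ℝ)^p) * (m^2*(a+m)^(p-2)) := mul_nonneg hCc hX
      nlinarith [hgoal, h11]
  -- bound for Φ
  have hΦb : ((a+m)^2)^(p/2) - a^p - p*a^(p-1)*m
      ≤ (p*(p-1) + (2:ℝ)^p + (1+p)) * (m^2*(a+m)^(p-2)) := by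
    have e2 : ((a+m)^2)^(p/2) = (a+m)^p := by
      rw [sq_rpow (by linarith) (p/2), show 2*(p/2) = p by ring]
    rw [e2]
    rcases le_or_gt m a with hc | hc
    · obtain ⟨ξ, hξ, hmvt⟩ := mvt_rpow hp1 ha.le (show a < a + m by linarith)
      obtain ⟨hξ1, hξ2⟩ := hξ
      have hξ0 : 0 < ξ := by linarith
      have hB := B1 (θ := p-1) (x := a) (y := ξ) (by linarith) ha.le hξ0
      rw [show p-1-1 = p-2 by ring] at hB
      have hmono : ξ^(p-2) ≤ (a+m)^(p-2) := rpow_le_rpow hξ0.le (by linarith) (by linarith)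
      have h4 : ξ^(p-2)*(ξ-a) ≤ (a+m)^(p-2)*m :=
        mul_le_mul hmono (by linarith) (by linarith) (by positivity)
      have hfact : p*m*(ξ^(p-1) - a^(p-1)) ≤ p*m*((p-1)*(ξ^(p-2)*(ξ-a))) := by
        apply mul_le_mul_of_nonneg_left _ (by positivity)
        nlinarith [hB]
      have h3'' : p*m*((p-1)*(ξ^(p-2)*(ξ-a))) ≤ p*m*((p-1)*((a+m)^(p-2)*m)) := by
        apply mul_le_mul_of_nonneg_left _ (by positivity)
        apply mul_le_mul_of_nonneg_left h4 (by linarith)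
      have hgoal : (a+m)^p - a^p - p*a^(p-1)*m ≤ p*(p-1)*(m^2*(a+m)^(p-2)) := by
        nlinarith [hmvt, hfact, h3'']
      have h5 : (0:ℝ) ≤ ((2:ℝ)^p + (1+p)) * (m^2*(a+m)^(p-2)) := mul_nonneg hCa hX
      nlinarith [hgoal, h5]
    · have h5 : (a+m)^p ≤ (2*m)^p := rpow_le_rpow (by linarith) (by linarith) (by linarith)
      have e6 : (2*m)^p = (2:ℝ)^p * m^p := mul_rpow (by norm_num) hm.le
      have h7 : m^(p-2) ≤ (a+m)^(p-2) := rpow_le_rpow hm.le (by linarith) (by linarith)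
      have h10 : m^p ≤ m^2*(a+m)^(p-2) := by
        rw [← em]
        calc m^(p-2)*m^2 ≤ (a+m)^(p-2)*m^2 := mul_le_mul_of_nonneg_right h7 (by positivity)
          _ = m^2*(a+m)^(p-2) := by ring
      have h11 : (2:ℝ)^p * m^p ≤ (2:ℝ)^p * (m^2*(a+m)^(p-2)) :=
        mul_le_mul_of_nonneg_left h10 (by positivity)
      have hap : (0:ℝ) ≤ a^p := by positivity
      have hap1 : (0:ℝ) ≤ p*a^(p-1)*m := by positivity
      have hgoal : (a+m)^p - a^p - p*a^(p-1)*m ≤ (2:ℝ)^p*(m^2*(a+m)^(p-2)) := by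
        nlinarith [h5, e6, h11]
      have h12 : (0:ℝ) ≤ (p*(p-1) + (1+p)) * (m^2*(a+m)^(p-2)) := mul_nonneg hCb hX
      nlinarith [hgoal, h12]
  -- convexity step
  obtain ⟨L, hLdef⟩ : ∃ x:ℝ, x = (a*m - s)/(2*(a*m)) := ⟨_, rfl⟩
  obtain ⟨M, hMdef⟩ : ∃ x:ℝ, x = (a*m + s)/(2*(a*m)) := ⟨_, rfl⟩
  have hL : 0 ≤ L := by rw [hLdef]; apply div_nonneg (by linarith [habs.2]) (by linarith)
  have hM : 0 ≤ M := by rw [hMdef]; apply div_nonneg (by linarith [habs.1]) (by linarith)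
  have hLM : L + M = 1 := by rw [hLdef, hMdef]; field_simp; ring
  have hconv := convexOn_rpow (show (1:ℝ) ≤ p/2 by linarith)
  have hcombo : L • ((a-m)^2) + M • ((a+m)^2) = a^2+2*s+m^2 := by
    rw [hLdef, hMdef, smul_eq_mul, smul_eq_mul, div_mul_eq_mul_div, div_mul_eq_mul_div,
      ← add_div, div_eq_iff (by positivity)]; ring
  have hkey := hconv.2 (Set.mem_Ici.mpr (by positivity : (0:ℝ) ≤ (a-m)^2))
    (Set.mem_Ici.mpr (by positivity : (0:ℝ) ≤ (a+m)^2)) hL hM hLM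
  rw [hcombo] at hkey
  simp only [smul_eq_mul] at hkey
  have haffine : L*(- (a^p) + p*a^(p-1)*m) + M*(- (a^p) - p*a^(p-1)*m)
      = -(a^p) - p*a^(p-2)*s := by
    rw [← ean, hLdef, hMdef]; field_simp; ring
  have hcomb2 : L*(((a-m)^2)^(p/2) - a^p + p*a^(p-1)*m) + M*(((a+m)^2)^(p/2) - a^p - p*a^(p-1)*m)
      ≤ (p*(p-1) + (2:ℝ)^p + (1+p)) * (m^2*(a+m)^(p-2)) := by
    obtain ⟨R, hR⟩ : ∃ x:ℝ, x = (p*(p-1) + (2:ℝ)^p + (1+p)) * (m^2*(a+m)^(p-2)) := ⟨_, rfl⟩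
    rw [← hR] at hΨb hΦb ⊢
    calc L*(((a-m)^2)^(p/2) - a^p + p*a^(p-1)*m) + M*(((a+m)^2)^(p/2) - a^p - p*a^(p-1)*m)
        ≤ L*R + M*R := add_le_add (mul_le_mul_of_nonneg_left hΨb hL)
          (mul_le_mul_of_nonneg_left hΦb hM)
      _ = R := by rw [← add_mul, hLM, one_mul]
  rw [hbp]
  linarith [hkey, haffine, hcomb2]

set_option maxHeartbeats 1000000 in
lemma upper_lt2 {p a m s b : ℝ} (hp1 : 1 < p) (hp : p ≤ 2) (ha : 0 < a) (hm : 0 < m)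
    (hs : |s| ≤ a*m) (hb : 0 ≤ b) (hb2 : b^2 = a^2+2*s+m^2) :
    b^p - a^p - p*a^(p-2)*s ≤
      (((3:ℝ)^p + p*(2:ℝ)^(p-1))*(3:ℝ)^(2-p) + (p/2)*(2/3:ℝ)^(p-2)) * (m^2*(m+a)^(p-2)) := by
  have habs := abs_le.mp hs
  rw [add_comm m a]
  have hX : (0:ℝ) ≤ m^2*(a+m)^(p-2) := by positivity
  have hbp : b^p = (a^2+2*s+m^2)^(p/2) := by
    rw [← hb2, sq_rpow hb, show 2*(p/2) = p by ring]
  have ean : a^(p-2)*a = a^(p-1) := by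
    rw [← Real.rpow_add_one ha.ne' (p-2)]; ring_nf
  have em : m^(p-2)*m^2 = m^p := by
    rw [← Real.rpow_natCast m 2, ← Real.rpow_add hm]; ring_nf
  have hK2 : (0:ℝ) ≤ (p/2)*(2/3:ℝ)^(p-2) := by positivity
  have hK1 : (0:ℝ) ≤ ((3:ℝ)^p + p*(2:ℝ)^(p-1))*(3:ℝ)^(2-p) := by positivity
  rcases lt_or_ge a (2*m) with hc | hc
  · -- a < 2m
    have hble : b ≤ a + m := by nlinarith [habs.2, hb, sq_nonneg (b - (a+m))]
    have hbp3 : b^p ≤ ((3:ℝ)*m)^p := rpow_le_rpow hb (by linarith) (by linarith)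
    have e1 : ((3:ℝ)*m)^p = (3:ℝ)^p*m^p := mul_rpow (by norm_num) hm.le
    have hterm : p*a^(p-2)*(-s) ≤ p*a^(p-2)*(a*m) := by
      apply mul_le_mul_of_nonneg_left (by linarith [habs.1]) (by positivity)
    have h3 : a^(p-1) ≤ ((2:ℝ)*m)^(p-1) := rpow_le_rpow ha.le (by linarith) (by linarith)
    have e4 : ((2:ℝ)*m)^(p-1) = (2:ℝ)^(p-1)*m^(p-1) := mul_rpow (by norm_num) hm.le
    have e5 : m^(p-1)*m = m^p := by
      rw [← Real.rpow_add_one hm.ne' (p-1)]; ring_nf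
    have hap : (0:ℝ) ≤ a^p := by positivity
    have hm5 : m^p ≤ (3:ℝ)^(2-p)*(m^2*(a+m)^(p-2)) := by
      have h6 : ((3:ℝ)*m)^(p-2) ≤ (a+m)^(p-2) :=
        rpow_le_rpow_of_nonpos (by linarith) (by linarith) (by linarith)
      have e7 : ((3:ℝ)*m)^(p-2) = (3:ℝ)^(p-2)*m^(p-2) := mul_rpow (by norm_num) hm.le
      have e8 : (3:ℝ)^(2-p)*(3:ℝ)^(p-2) = 1 := by
        rw [← Real.rpow_add (by norm_num)]; norm_num
      have h9 : (3:ℝ)^(2-p)*((3:ℝ)*m)^(p-2)*m^2 ≤ (3:ℝ)^(2-p)*(a+m)^(p-2)*m^2 := by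
        apply mul_le_mul_of_nonneg_right _ (by positivity)
        exact mul_le_mul_of_nonneg_left h6 (by positivity)
      calc m^p = m^(p-2)*m^2 := em.symm
        _ = ((3:ℝ)^(2-p)*(3:ℝ)^(p-2))*m^(p-2)*m^2 := by rw [e8]; ring
        _ = (3:ℝ)^(2-p)*((3:ℝ)*m)^(p-2)*m^2 := by rw [e7]; ring
        _ ≤ (3:ℝ)^(2-p)*(a+m)^(p-2)*m^2 := h9
        _ = (3:ℝ)^(2-p)*(m^2*(a+m)^(p-2)) := by ring
    -- combine
    have h10 : a^(p-1)*m ≤ (2:ℝ)^(p-1)*m^p := by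
      calc a^(p-1)*m ≤ ((2:ℝ)*m)^(p-1)*m := mul_le_mul_of_nonneg_right h3 hm.le
        _ = (2:ℝ)^(p-1)*(m^(p-1)*m) := by rw [e4]; ring
        _ = (2:ℝ)^(p-1)*m^p := by rw [e5]
    have h11 : p*(a^(p-1)*m) ≤ p*((2:ℝ)^(p-1)*m^p) :=
      mul_le_mul_of_nonneg_left h10 (by linarith)
    have hDm : b^p - a^p - p*a^(p-2)*s ≤ ((3:ℝ)^p + p*(2:ℝ)^(p-1))*m^p := by
      have e12 : p*a^(p-2)*(a*m) = p*(a^(p-1)*m) := by rw [← ean]; ring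
      nlinarith [hbp3, e1, hterm, h11, e12, hap]
    calc b^p - a^p - p*a^(p-2)*s ≤ ((3:ℝ)^p + p*(2:ℝ)^(p-1))*m^p := hDm
      _ ≤ ((3:ℝ)^p + p*(2:ℝ)^(p-1))*((3:ℝ)^(2-p)*(m^2*(a+m)^(p-2))) :=
          mul_le_mul_of_nonneg_left hm5 (by positivity)
      _ = (((3:ℝ)^p + p*(2:ℝ)^(p-1))*(3:ℝ)^(2-p))*(m^2*(a+m)^(p-2)) := by ring
      _ ≤ _ := by nlinarith [mul_nonneg hK2 hX]
  · -- 2m ≤ a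
    have hQ : (0:ℝ) ≤ a^2+2*s+m^2 := by rw [← hb2]; positivity
    have key := B2 (θ := p/2) (x := a^2+2*s+m^2) (y := a^2) (by linarith) (by linarith)
      hQ (by positivity)
    rw [sq_rpow ha.le (p/2), sq_rpow ha.le (p/2-1), show 2*(p/2) = p by ring,
      show 2*(p/2-1) = p-2 by ring] at key
    have hD : b^p - a^p - p*a^(p-2)*s ≤ (p/2)*a^(p-2)*m^2 := by
      rw [hbp]; nlinarith [key]
    have hmono : a^(p-2) ≤ (2/3:ℝ)^(p-2)*(a+m)^(p-2) := by
      have h6 : ((2/3:ℝ)*(a+m))^(p-2) ≥ a^(p-2) := by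
        apply rpow_le_rpow_of_nonpos (by positivity) (by linarith) (by linarith)
      calc a^(p-2) ≤ ((2/3:ℝ)*(a+m))^(p-2) := h6
        _ = (2/3:ℝ)^(p-2)*(a+m)^(p-2) := mul_rpow (by norm_num) (by positivity)
    have h7 : (p/2)*a^(p-2)*m^2 ≤ (p/2)*((2/3:ℝ)^(p-2)*(a+m)^(p-2))*m^2 := by
      apply mul_le_mul_of_nonneg_right _ (by positivity)
      exact mul_le_mul_of_nonneg_left hmono (by linarith)
    calc b^p - a^p - p*a^(p-2)*s ≤ (p/2)*a^(p-2)*m^2 := hD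
      _ ≤ (p/2)*((2/3:ℝ)^(p-2)*(a+m)^(p-2))*m^2 := h7
      _ = ((p/2)*(2/3:ℝ)^(p-2))*(m^2*(a+m)^(p-2)) := by ring
      _ ≤ _ := by nlinarith [mul_nonneg hK1 hX]

set_option maxHeartbeats 1000000 in
lemma lower_lt2 {p a m s b : ℝ} (hp1 : 1 < p) (hp : p ≤ 2) (ha : 0 < a) (hm : 0 < m)
    (hs : |s| ≤ a*m) (hb : 0 ≤ b) (hb2 : b^2 = a^2+2*s+m^2) :
    min (p*(p-1)/4)
      (min ((p-1)*(1/2:ℝ)^p) (min ((3/4:ℝ)^p - (1/4:ℝ)^p) (p * (4:ℝ)^(1-p))))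
      * (m^2*(m+a)^(p-2)) ≤ b^p - a^p - p*a^(p-2)*s := by
  have habs := abs_le.mp hs
  rw [add_comm m a]
  have hX : (0:ℝ) ≤ m^2*(a+m)^(p-2) := by positivity
  have hbp : b^p = (a^2+2*s+m^2)^(p/2) := by
    rw [← hb2, sq_rpow hb, show 2*(p/2) = p by ring]
  have ean : a^(p-2)*a = a^(p-1) := by
    rw [← Real.rpow_add_one ha.ne' (p-2)]; ring_nf
  have em : m^(p-2)*m^2 = m^p := by
    rw [← Real.rpow_natCast m 2, ← Real.rpow_add hm]; ring_nf
  have ham : (0:ℝ) < a*m := by positivity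
  obtain ⟨cm, hcm⟩ : ∃ x:ℝ, x = min (p*(p-1)/4)
      (min ((p-1)*(1/2:ℝ)^p) (min ((3/4:ℝ)^p - (1/4:ℝ)^p) (p * (4:ℝ)^(1-p)))) := ⟨_, rfl⟩
  rw [← hcm]
  have hcm1 : cm ≤ p*(p-1)/4 := hcm ▸ min_le_left _ _
  have hcm2 : cm ≤ (p-1)*(1/2:ℝ)^p := hcm ▸ le_trans (min_le_right _ _) (min_le_left _ _)
  have hcm3 : cm ≤ min ((3/4:ℝ)^p - (1/4:ℝ)^p) (p * (4:ℝ)^(1-p)) :=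
    hcm ▸ le_trans (min_le_right _ _) (min_le_right _ _)
  -- m^p ≥ m^2 (a+m)^(p-2)
  have hmp_ge : m^2*(a+m)^(p-2) ≤ m^p := by
    have h7 : (a+m)^(p-2) ≤ m^(p-2) :=
      rpow_le_rpow_of_nonpos hm (by linarith) (by linarith)
    calc m^2*(a+m)^(p-2) ≤ m^2*m^(p-2) := mul_le_mul_of_nonneg_left h7 (by positivity)
      _ = m^(p-2)*m^2 := by ring
      _ = m^p := em
  -- lower bound for Φ
  have hΦ : cm*(m^2*(a+m)^(p-2)) ≤ ((a+m)^2)^(p/2) - a^p - p*a^(p-1)*m := by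
    have e2 : ((a+m)^2)^(p/2) = (a+m)^p := by
      rw [sq_rpow (by positivity) (p/2), show 2*(p/2) = p by ring]
    rw [e2]
    obtain ⟨ξ, hξ, hmvt⟩ := mvt_rpow hp1 (show (0:ℝ) ≤ a + m/2 by positivity)
      (show a + m/2 < a + m by linarith)
    obtain ⟨hξ1, hξ2⟩ := hξ
    have hξ0 : (0:ℝ) < ξ := by linarith
    have hB2a := B2 (θ := p-1) (x := a) (y := ξ) (by linarith) (by linarith) ha.le hξ0
    rw [show p-1-1 = p-2 by ring] at hB2a
    have hB1a := B1 (θ := p) (x := a + m/2) (y := a) (by linarith) (by linarith) ha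
    rw [show p-1 = p-1 by ring] at hB1a
    have hmono : (a+m)^(p-2) ≤ ξ^(p-2) :=
      rpow_le_rpow_of_nonpos hξ0 (by linarith) (by linarith)
    have h4 : (a+m)^(p-2)*(m/2) ≤ ξ^(p-2)*(ξ-a) :=
      mul_le_mul hmono (by linarith) (by linarith) (by positivity)
    have hf : (p-1)*((a+m)^(p-2)*(m/2)) ≤ ξ^(p-1) - a^(p-1) := by
      have h5 : (p-1)*((a+m)^(p-2)*(m/2)) ≤ (p-1)*(ξ^(p-2)*(ξ-a)) :=
        mul_le_mul_of_nonneg_left h4 (by linarith)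
      nlinarith [hB2a]
    have hf2 : p*(m/2)*((p-1)*((a+m)^(p-2)*(m/2))) ≤ p*(m/2)*(ξ^(p-1) - a^(p-1)) :=
      mul_le_mul_of_nonneg_left hf (by positivity)
    have hcmX : cm*(m^2*(a+m)^(p-2)) ≤ (p*(p-1)/4)*(m^2*(a+m)^(p-2)) :=
      mul_le_mul_of_nonneg_right hcm1 hX
    nlinarith [hmvt, hf2, hB1a, hcmX]
  -- lower bound for Ψ
  have hΨ : cm*(m^2*(a+m)^(p-2)) ≤ ((a-m)^2)^(p/2) - a^p + p*a^(p-1)*m := by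
    rcases le_or_gt m a with hc | hc
    · -- m ≤ a
      have e2 : ((a-m)^2)^(p/2) = (a-m)^p := by
        rw [sq_rpow (by linarith) (p/2), show 2*(p/2) = p by ring]
      rw [e2]
      obtain ⟨ξ, hξ, hmvt⟩ := mvt_rpow hp1 (show (0:ℝ) ≤ a - m by linarith)
        (show a - m < a - m/2 by linarith)
      obtain ⟨hξ1, hξ2⟩ := hξ
      have hξ0 : (0:ℝ) < ξ := by
        rcases lt_or_ge 0 (a-m) with h | h
        · linarith
        · have : m = a := by linarith
          linarith
      have hB2b := B2 (θ := p-1) (x := ξ) (y := a) (by linarith) (by linarith) hξ0.le ha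
      rw [show p-1-1 = p-2 by ring] at hB2b
      have hB1b := B1 (θ := p) (x := a - m/2) (y := a) (by linarith) (by linarith) ha
      have hf : (p-1)*(a^(p-2)*(m/2)) ≤ a^(p-1) - ξ^(p-1) := by
        have h5 : (p-1)*(a^(p-2)*(m/2)) ≤ (p-1)*(a^(p-2)*(a-ξ)) := by
          apply mul_le_mul_of_nonneg_left _ (by linarith)
          apply mul_le_mul_of_nonneg_left (by linarith) (by positivity)
        nlinarith [hB2b]
      have hf2 : p*(m/2)*((p-1)*(a^(p-2)*(m/2))) ≤ p*(m/2)*(a^(p-1) - ξ^(p-1)) :=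
        mul_le_mul_of_nonneg_left hf (by positivity)
      have hmono : (a+m)^(p-2) ≤ a^(p-2) :=
        rpow_le_rpow_of_nonpos ha (by linarith) (by linarith)
      have hmono2 : (p*(p-1)/4)*(m^2*(a+m)^(p-2)) ≤ (p*(p-1)/4)*(m^2*a^(p-2)) := by
        apply mul_le_mul_of_nonneg_left _ (by nlinarith)
        exact mul_le_mul_of_nonneg_left hmono (by positivity)
      have hcmX : cm*(m^2*(a+m)^(p-2)) ≤ (p*(p-1)/4)*(m^2*(a+m)^(p-2)) :=
        mul_le_mul_of_nonneg_right hcm1 hX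
      nlinarith [hmvt, hf2, hB1b, hcmX, hmono2]
    · rcases lt_or_ge m (2*a) with hc2 | hc2
      · -- a < m < 2a
        have e2 : ((a-m)^2)^(p/2) = (m-a)^p := by
          rw [show (a-m)^2 = (m-a)^2 by ring, sq_rpow (by linarith) (p/2),
            show 2*(p/2) = p by ring]
        rw [e2]
        have e10 : a^(p-1)*a = a^p := by
          rw [← Real.rpow_add_one ha.ne' (p-1)]; ring_nf
        have h5 : a^p ≤ a^(p-1)*m := by
          calc a^p = a^(p-1)*a := e10.symm
            _ ≤ a^(p-1)*m := mul_le_mul_of_nonneg_left hc.le (by positivity)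
        have h6 : ((1/2:ℝ)*m)^p ≤ a^p := rpow_le_rpow (by positivity) (by linarith) (by linarith)
        have e7 : ((1/2:ℝ)*m)^p = (1/2:ℝ)^p*m^p := mul_rpow (by norm_num) hm.le
        have h8 : (0:ℝ) ≤ (m-a)^p := rpow_nonneg (by linarith) p
        have h9 : (p-1)*((1/2:ℝ)^p*(m^2*(a+m)^(p-2))) ≤ (p-1)*((1/2:ℝ)^p*m^p) := by
          apply mul_le_mul_of_nonneg_left _ (by linarith)
          exact mul_le_mul_of_nonneg_left hmp_ge (by positivity)
        have hcmX : cm*(m^2*(a+m)^(p-2)) ≤ ((p-1)*(1/2:ℝ)^p)*(m^2*(a+m)^(p-2)) :=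
          mul_le_mul_of_nonneg_right hcm2 hX
        nlinarith [h5, h6, e7, h8, h9, hcmX, mul_le_mul_of_nonneg_left h6 (by linarith : (0:ℝ) ≤ p-1)]
      · -- 2a ≤ m
        have e2 : ((a-m)^2)^(p/2) = (m-a)^p := by
          rw [show (a-m)^2 = (m-a)^2 by ring, sq_rpow (by linarith) (p/2),
            show 2*(p/2) = p by ring]
        rw [e2]
        have hh2 := H2 hp1 ha.le hm hc2
        have hmn : (0:ℝ) ≤ min ((3/4:ℝ)^p - (1/4:ℝ)^p) (p * (4:ℝ)^(1-p)) := by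
          apply le_min
          · have : (1/4:ℝ)^p ≤ (3/4:ℝ)^p := rpow_le_rpow (by norm_num) (by norm_num) (by linarith)
            linarith
          · positivity
        have h9 : min ((3/4:ℝ)^p - (1/4:ℝ)^p) (p * (4:ℝ)^(1-p))*(m^2*(a+m)^(p-2))
            ≤ min ((3/4:ℝ)^p - (1/4:ℝ)^p) (p * (4:ℝ)^(1-p))*m^p :=
          mul_le_mul_of_nonneg_left hmp_ge hmn
        have hcmX : cm*(m^2*(a+m)^(p-2))
            ≤ min ((3/4:ℝ)^p - (1/4:ℝ)^p) (p * (4:ℝ)^(1-p))*(m^2*(a+m)^(p-2)) :=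
          mul_le_mul_of_nonneg_right hcm3 hX
        linarith [hh2]
  -- concavity step
  obtain ⟨L, hLdef⟩ : ∃ x:ℝ, x = (a*m - s)/(2*(a*m)) := ⟨_, rfl⟩
  obtain ⟨M, hMdef⟩ : ∃ x:ℝ, x = (a*m + s)/(2*(a*m)) := ⟨_, rfl⟩
  have hL : 0 ≤ L := by rw [hLdef]; apply div_nonneg (by linarith [habs.2]) (by linarith)
  have hM : 0 ≤ M := by rw [hMdef]; apply div_nonneg (by linarith [habs.1]) (by linarith)
  have hLM : L + M = 1 := by rw [hLdef, hMdef]; field_simp; ring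
  have hconc := Real.concaveOn_rpow (show (0:ℝ) ≤ p/2 by linarith) (show p/2 ≤ 1 by linarith)
  have hcombo : L • ((a-m)^2) + M • ((a+m)^2) = a^2+2*s+m^2 := by
    rw [hLdef, hMdef, smul_eq_mul, smul_eq_mul, div_mul_eq_mul_div, div_mul_eq_mul_div,
      ← add_div, div_eq_iff (by positivity)]; ring
  have hkey := hconc.2 (Set.mem_Ici.mpr (by positivity : (0:ℝ) ≤ (a-m)^2))
    (Set.mem_Ici.mpr (by positivity : (0:ℝ) ≤ (a+m)^2)) hL hM hLM
  rw [hcombo] at hkey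
  simp only [smul_eq_mul] at hkey
  have haffine : L*(- (a^p) + p*a^(p-1)*m) + M*(- (a^p) - p*a^(p-1)*m)
      = -(a^p) - p*a^(p-2)*s := by
    rw [← ean, hLdef, hMdef]; field_simp; ring
  have hcomb2 : cm*(m^2*(a+m)^(p-2))
      ≤ L*(((a-m)^2)^(p/2) - a^p + p*a^(p-1)*m) + M*(((a+m)^2)^(p/2) - a^p - p*a^(p-1)*m) := by
    obtain ⟨R, hR⟩ : ∃ x:ℝ, x = cm*(m^2*(a+m)^(p-2)) := ⟨_, rfl⟩
    rw [← hR] at hΨ hΦ ⊢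
    calc R = L*R + M*R := by rw [← add_mul, hLM, one_mul]
      _ ≤ _ := add_le_add (mul_le_mul_of_nonneg_left hΨ hL)
          (mul_le_mul_of_nonneg_left hΦ hM)
  rw [hbp]
  linarith [hkey, haffine, hcomb2]

lemma scalar_bregman {p : ℝ} (hp : 1 < p) : ∃ c C : ℝ, 0 < c ∧ 0 < C ∧
    ∀ a m b s : ℝ, 0 ≤ a → 0 ≤ m → 0 ≤ b → b^2 = a^2+2*s+m^2 → |s| ≤ a*m →
      c * (m^2*(m+a)^(p-2)) ≤ b^p - a^p - p*a^(p-2)*s ∧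
        b^p - a^p - p*a^(p-2)*s ≤ C * (m^2*(m+a)^(p-2)) := by
  have hp0 : (0:ℝ) < p := by linarith
  have hmn : (0:ℝ) < min ((3/4:ℝ)^p - (1/4:ℝ)^p) (p * (4:ℝ)^(1-p)) := by
    apply lt_min
    · have : (1/4:ℝ)^p < (3/4:ℝ)^p := by
        apply Real.rpow_lt_rpow (by norm_num) (by norm_num) hp0
      linarith
    · positivity
  have trivial_case : ∀ c C : ℝ, c ≤ 1 → 1 ≤ C →
      ∀ a m b s : ℝ, 0 ≤ a → 0 ≤ m → 0 ≤ b → b^2 = a^2+2*s+m^2 → |s| ≤ a*m →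
      (m = 0 ∨ a = 0) →
      c * (m^2*(m+a)^(p-2)) ≤ b^p - a^p - p*a^(p-2)*s ∧
        b^p - a^p - p*a^(p-2)*s ≤ C * (m^2*(m+a)^(p-2)) := by
    intro c C hc hC a m b s ha hm hb hb2 hs hdeg
    rcases hdeg with rfl' | rfl'
    · subst rfl'
      have hs0 : s = 0 := by
        have : |s| = 0 := le_antisymm (by simpa using hs) (abs_nonneg s)
        exact abs_eq_zero.mp this
      subst hs0
      have hba : b = a := by nlinarith [hb2]
      rw [hba]
      norm_num
    · subst rfl'
      have hs0 : s = 0 := by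
        have : |s| = 0 := le_antisymm (by simpa using hs) (abs_nonneg s)
        exact abs_eq_zero.mp this
      subst hs0
      have hbm : b = m := by nlinarith [hb2]
      rw [hbm]
      rcases eq_or_lt_of_le hm with hm0 | hm0
      · rw [← hm0]
        norm_num
      · have e0 : (0:ℝ)^p = 0 := Real.zero_rpow hp0.ne'
        have em : m^(p-2)*m^2 = m^p := by
          rw [← Real.rpow_natCast m 2, ← Real.rpow_add hm0]; ring_nf
        have hmm : m^p - (0:ℝ)^p - p*(0:ℝ)^(p-2)*0 = m^2*(m+0)^(p-2) := by
          rw [e0, add_zero, mul_zero, sub_zero, sub_zero, ← em]; ring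
        have hXp : (0:ℝ) ≤ m^2*(m+0)^(p-2) := by positivity
        constructor
        · rw [hmm]
          calc c*(m^2*(m+0)^(p-2)) ≤ 1*(m^2*(m+0)^(p-2)) :=
                mul_le_mul_of_nonneg_right hc hXp
            _ = m^2*(m+0)^(p-2) := one_mul _
        · rw [hmm]
          calc m^2*(m+0)^(p-2) = 1*(m^2*(m+0)^(p-2)) := (one_mul _).symm
            _ ≤ C*(m^2*(m+0)^(p-2)) := mul_le_mul_of_nonneg_right hC hXp
  rcases le_or_gt 2 p with hp2 | hp2
  · -- p ≥ 2
    refine ⟨min 1 (min ((p/2) * (3:ℝ)^(2-p))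
        (min ((3/4:ℝ)^p - (1/4:ℝ)^p) (p * (4:ℝ)^(1-p)) * (2/3:ℝ)^(p-2))),
      max 1 (p*(p-1) + (2:ℝ)^p + (1+p)), ?_, ?_, ?_⟩
    · exact lt_min one_pos (lt_min (by positivity) (mul_pos hmn (by positivity)))
    · exact lt_of_lt_of_le one_pos (le_max_left _ _)
    · intro a m b s ha hm hb hb2 hs
      rcases eq_or_lt_of_le hm with hm0 | hm0
      · exact trivial_case _ _ (min_le_left _ _) (le_max_left _ _) a m b s ha hm hb hb2 hs
          (Or.inl hm0.symm)
      rcases eq_or_lt_of_le ha with ha0 | ha0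
      · exact trivial_case _ _ (min_le_left _ _) (le_max_left _ _) a m b s ha hm hb hb2 hs
          (Or.inr ha0.symm)
      have hX : (0:ℝ) ≤ m^2*(m+a)^(p-2) := by positivity
      constructor
      · calc _ ≤ min ((p/2) * (3:ℝ)^(2-p))
              (min ((3/4:ℝ)^p - (1/4:ℝ)^p) (p * (4:ℝ)^(1-p)) * (2/3:ℝ)^(p-2))
            * (m^2*(m+a)^(p-2)) := mul_le_mul_of_nonneg_right (min_le_right _ _) hX
          _ ≤ _ := lower_ge2 hp2 ha0 hm0 hs hb hb2
      · calc b^p - a^p - p*a^(p-2)*s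
            ≤ (p*(p-1) + (2:ℝ)^p + (1+p))*(m^2*(m+a)^(p-2)) := upper_ge2 hp2 ha0 hm0 hs hb hb2
          _ ≤ _ := mul_le_mul_of_nonneg_right (le_max_right _ _) hX
  · -- p < 2
    refine ⟨min 1 (min (p*(p-1)/4)
        (min ((p-1)*(1/2:ℝ)^p) (min ((3/4:ℝ)^p - (1/4:ℝ)^p) (p * (4:ℝ)^(1-p))))),
      max 1 (((3:ℝ)^p + p*(2:ℝ)^(p-1))*(3:ℝ)^(2-p) + (p/2)*(2/3:ℝ)^(p-2)), ?_, ?_, ?_⟩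
    · refine lt_min one_pos (lt_min (by nlinarith) (lt_min (mul_pos (by linarith) (by positivity)) hmn))
    · exact lt_of_lt_of_le one_pos (le_max_left _ _)
    · intro a m b s ha hm hb hb2 hs
      rcases eq_or_lt_of_le hm with hm0 | hm0
      · exact trivial_case _ _ (min_le_left _ _) (le_max_left _ _) a m b s ha hm hb hb2 hs
          (Or.inl hm0.symm)
      rcases eq_or_lt_of_le ha with ha0 | ha0
      · exact trivial_case _ _ (min_le_left _ _) (le_max_left _ _) a m b s ha hm hb hb2 hs
          (Or.inr ha0.symm)
      have hX : (0:ℝ) ≤ m^2*(m+a)^(p-2) := by positivity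
      constructor
      · calc _ ≤ min (p*(p-1)/4)
              (min ((p-1)*(1/2:ℝ)^p) (min ((3/4:ℝ)^p - (1/4:ℝ)^p) (p * (4:ℝ)^(1-p))))
            * (m^2*(m+a)^(p-2)) := mul_le_mul_of_nonneg_right (min_le_right _ _) hX
          _ ≤ _ := lower_lt2 hp hp2.le ha0 hm0 hs hb hb2
      · calc b^p - a^p - p*a^(p-2)*s
            ≤ (((3:ℝ)^p + p*(2:ℝ)^(p-1))*(3:ℝ)^(2-p) + (p/2)*(2/3:ℝ)^(p-2))*(m^2*(m+a)^(p-2)) :=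
              upper_lt2 hp hp2.le ha0 hm0 hs hb hb2
          _ ≤ _ := mul_le_mul_of_nonneg_right (le_max_right _ _) hX

end Helpers

/-- The norm `|ξ|_A = √(Aξ·ξ)` induced by a positive definite symmetric matrix `A`. -/
noncomputable def matNorm {n : ℕ} (A : Matrix (Fin n) (Fin n) ℝ) (v : Fin n → ℝ) : ℝ :=
  Real.sqrt (dotProduct (A.mulVec v) v)

/-- Two-sided estimate for the Bregman distance of `ξ ↦ |ξ|_A^p`. -/
theorem bregman_matrix_two_sided (n : ℕ) (A : Matrix (Fin n) (Fin n) ℝ)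
    (hAsymm : A.IsSymm) (hApd : A.PosDef) (p : ℝ) (hp : 1 < p) :
    ∃ c C : ℝ, 0 < c ∧ 0 < C ∧
      ∀ ξ η : Fin n → ℝ,
        c * matNorm A η ^ 2 * (matNorm A η + matNorm A ξ) ^ (p - 2) ≤
            matNorm A (ξ + η) ^ p - matNorm A ξ ^ p -
              p * matNorm A ξ ^ (p - 2) * dotProduct (A.mulVec ξ) η ∧
          matNorm A (ξ + η) ^ p - matNorm A ξ ^ p -
              p * matNorm A ξ ^ (p - 2) * dotProduct (A.mulVec ξ) η ≤
            C * matNorm A η ^ 2 * (matNorm A η + matNorm A ξ) ^ (p - 2) := by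
  obtain ⟨c, C, hc, hC, hmain⟩ := scalar_bregman hp
  have hQnonneg : ∀ v : Fin n → ℝ, 0 ≤ dotProduct (A.mulVec v) v := by
    intro v
    have h := hApd.posSemidef.dotProduct_mulVec_nonneg v
    simpa [dotProduct_comm] using h
  have hsym : ∀ u v : Fin n → ℝ,
      dotProduct (A.mulVec u) v = dotProduct (A.mulVec v) u := by
    intro u v
    calc dotProduct (A.mulVec u) v = dotProduct v (A.mulVec u) :=
          dotProduct_comm _ _
      _ = dotProduct (Matrix.vecMul v A) u := (Matrix.dotProduct_mulVec v A u)
      _ = dotProduct (A.mulVec v) u := by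
          rw [show Matrix.vecMul v A = A.mulVec v by
            conv_lhs => rw [← hAsymm]
            exact Matrix.vecMul_transpose A v]
  refine ⟨c, C, hc, hC, ?_⟩
  intro ξ η
  obtain ⟨a, hadef⟩ : ∃ x:ℝ, x = matNorm A ξ := ⟨_, rfl⟩
  obtain ⟨m, hmdef⟩ : ∃ x:ℝ, x = matNorm A η := ⟨_, rfl⟩
  obtain ⟨b, hbdef⟩ : ∃ x:ℝ, x = matNorm A (ξ+η) := ⟨_, rfl⟩
  obtain ⟨s, hsdef⟩ : ∃ x:ℝ, x = dotProduct (A.mulVec ξ) η := ⟨_, rfl⟩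
  have ha : 0 ≤ a := hadef ▸ Real.sqrt_nonneg _
  have hm : 0 ≤ m := hmdef ▸ Real.sqrt_nonneg _
  have hb : 0 ≤ b := hbdef ▸ Real.sqrt_nonneg _
  have ha2 : a^2 = dotProduct (A.mulVec ξ) ξ := by
    rw [hadef, matNorm, Real.sq_sqrt (hQnonneg ξ)]
  have hm2 : m^2 = dotProduct (A.mulVec η) η := by
    rw [hmdef, matNorm, Real.sq_sqrt (hQnonneg η)]
  have hb2 : b^2 = a^2 + 2*s + m^2 := by
    rw [hbdef, matNorm, Real.sq_sqrt (hQnonneg (ξ+η)), ha2, hm2, hsdef]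
    rw [Matrix.mulVec_add, add_dotProduct, dotProduct_add,
      dotProduct_add, hsym η ξ]
    ring
  have hcs : |s| ≤ a*m := by
    have hquad : ∀ t : ℝ, 0 ≤ (dotProduct (A.mulVec η) η) * (t*t) + (2*s)*t
        + dotProduct (A.mulVec ξ) ξ := by
      intro t
      have h := hQnonneg (ξ + t • η)
      have e : dotProduct (A.mulVec (ξ + t • η)) (ξ + t • η)
          = dotProduct (A.mulVec ξ) ξ + 2*s*t
            + (dotProduct (A.mulVec η) η)*(t*t) := by
        rw [Matrix.mulVec_add, Matrix.mulVec_smul, add_dotProduct,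
          dotProduct_add, dotProduct_add, smul_dotProduct,
          dotProduct_smul, smul_dotProduct, dotProduct_smul,
          hsym η ξ, hsdef]
        simp only [smul_eq_mul]
        ring
      rw [e] at h
      linarith
    have hd := discrim_le_zero hquad
    rw [discrim] at hd
    have hs2 : s^2 ≤ (a*m)^2 := by
      have : (a*m)^2 = a^2*m^2 := by ring
      rw [this, ha2, hm2]
      nlinarith [hd]
    calc |s| = Real.sqrt (s^2) := (Real.sqrt_sq_eq_abs s).symm
      _ ≤ Real.sqrt ((a*m)^2) := Real.sqrt_le_sqrt hs2
      _ = a*m := Real.sqrt_sq (by positivity)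
  obtain ⟨h1, h2⟩ := hmain a m b s ha hm hb hb2 hcs
  rw [← hadef, ← hmdef, ← hbdef, ← hsdef]
  constructor
  · calc c * m^2 * (m+a)^(p-2) = c * (m^2*(m+a)^(p-2)) := by ring
      _ ≤ _ := h1
  · calc b^p - a^p - p*a^(p-2)*s ≤ C * (m^2*(m+a)^(p-2)) := h2
      _ = C * m^2 * (m+a)^(p-2) := by ring
end

section
/- Let 1 < p < s < ∞ and fix positive weights a₁,…,aₙ. Define |ξ|_{s,a} := (Σᵢ aᵢ|ξᵢ|^s)^{1/s}. There exists C(p,s) > 0 such that for all ξ, η ∈ ℝⁿ with ξ ≠ 0, |ξ+η|_{s,a}^p − |ξ|_{s,a}^p − p·|ξ|_{s,a}^{p-s}·Σᵢ aᵢ|ξᵢ|^{s-2}ξᵢηᵢ ≤ C(p,s)·|ξ|_{s,a}^{p-s}·Σᵢ |ηᵢ'|²(|ηᵢ'| + |ξᵢ'|)^{s-2}, where ξᵢ' := aᵢ^{1/s}ξᵢ and ηᵢ' := aᵢ^{1/s}ηᵢ. -/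
/-- Comparison of rpow with arbitrary real exponent for comparable bases. -/
lemma rpow_comparable {t K u v : ℝ} (hK : 1 ≤ K) (hu : 0 < u) (hv : 0 < v)
    (h1 : u ≤ K * v) (h2 : v ≤ K * u) : u ^ t ≤ K ^ |t| * v ^ t := by
  have hK0 : (0:ℝ) < K := lt_of_lt_of_le one_pos hK
  rcases le_or_gt 0 t with ht | ht
  · rw [abs_of_nonneg ht]
    calc u ^ t ≤ (K * v) ^ t := Real.rpow_le_rpow hu.le h1 ht
      _ = K ^ t * v ^ t := Real.mul_rpow hK0.le hv.le
  · rw [abs_of_neg ht]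
    have hvK : v / K ≤ u := (div_le_iff₀ hK0).mpr (by linarith)
    have hvK0 : 0 < v / K := div_pos hv hK0
    calc u ^ t ≤ (v / K) ^ t := Real.rpow_le_rpow_of_nonpos hvK0 hvK ht.le
      _ = K ^ (-t) * v ^ t := by
          rw [Real.div_rpow hv.le hK0.le, Real.rpow_neg hK0.le, div_eq_mul_inv, mul_comm]

/-- Derivative of `u ↦ |u|^(s-2) * u` away from `0`. -/
lemma hasDerivAt_abs_rpow_mul_self {s u : ℝ} (hu : u ≠ 0) :
    HasDerivAt (fun v : ℝ => |v| ^ (s - 2) * v) ((s - 1) * |u| ^ (s - 2)) u := by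
  rcases hu.lt_or_gt with h | h
  · have hd : HasDerivAt (fun v : ℝ => -((-v) ^ (s - 1)))
        ((s - 1) * (-u) ^ (s - 2)) u := by
      have h1 : HasDerivAt (fun v : ℝ => (-v) ^ (s - 1))
          ((s - 1) * (-u) ^ (s - 1 - 1) * (-1)) u :=
        (Real.hasDerivAt_rpow_const (p := s - 1) (Or.inl (neg_ne_zero.mpr hu))).comp u
          (hasDerivAt_neg u)
      have := h1.neg
      convert this using 1
      case e'_4 => rfl
      case e'_5 => rfl
      case e'_8 => rfl
      rw [show s - 1 - 1 = s - 2 from by ring]; ring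
    have heq : (fun v : ℝ => |v| ^ (s - 2) * v) =ᶠ[nhds u]
        (fun v : ℝ => -((-v) ^ (s - 1))) := by
      filter_upwards [Iio_mem_nhds h] with v hv
      have hv' : (v:ℝ) < 0 := hv
      rw [abs_of_neg hv']
      rw [show s - 1 = (s - 2) + 1 by ring, Real.rpow_add (by linarith) , Real.rpow_one]
      ring
    have := hd.congr_of_eventuallyEq heq
    convert this using 1
    case e'_4 => rfl
    case e'_5 => rfl
    rw [abs_of_neg h]
  · have hd : HasDerivAt (fun v : ℝ => v ^ (s - 1)) ((s - 1) * u ^ (s - 1 - 1)) u :=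
      Real.hasDerivAt_rpow_const (p := s - 1) (Or.inl hu)
    have heq : (fun v : ℝ => |v| ^ (s - 2) * v) =ᶠ[nhds u]
        (fun v : ℝ => v ^ (s - 1)) := by
      filter_upwards [Ioi_mem_nhds h] with v hv
      have hv' : (0:ℝ) < v := hv
      rw [abs_of_pos hv', show s - 1 = (s - 2) + 1 by ring, Real.rpow_add hv', Real.rpow_one]
    have := hd.congr_of_eventuallyEq heq
    convert this using 1
    case e'_4 => rfl
    case e'_5 => rfl
    rw [abs_of_pos h, show s - 1 - 1 = s - 2 from by ring]

/-- The key scalar inequality: second-order Taylor-type upper bound for `|·|^s`, `s > 1`. -/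
lemma scalar_key {s : ℝ} (hs : 1 < s) :
    ∃ C : ℝ, 0 < C ∧ ∀ x y : ℝ,
      |x + y| ^ s - |x| ^ s - s * |x| ^ (s - 2) * x * y ≤
        C * (y ^ 2 * (|y| + |x|) ^ (s - 2)) := by
  have hs0 : (0:ℝ) < s := by linarith
  have hs1 : (0:ℝ) < s - 1 := by linarith
  have h3a : (0:ℝ) < 3 ^ |s - 2| := Real.rpow_pos_of_pos (by norm_num) _
  have h3s : (0:ℝ) < 3 ^ s := Real.rpow_pos_of_pos (by norm_num) _
  have h2s : (0:ℝ) < 2 ^ (s - 1) := Real.rpow_pos_of_pos (by norm_num) _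
  have hsum : (0:ℝ) < 3 ^ s + s * 2 ^ (s - 1) :=
    add_pos h3s (mul_pos hs0 h2s)
  refine ⟨3 ^ |s - 2| * (3 ^ s + s * 2 ^ (s - 1) + s * (s - 1)), by
    exact mul_pos h3a (add_pos hsum (mul_pos hs0 hs1)), fun x y => ?_⟩
  set Q : ℝ := y ^ 2 * (|y| + |x|) ^ (s - 2) with hQdef
  have hQ : 0 ≤ Q := mul_nonneg (sq_nonneg y)
    (Real.rpow_nonneg (by positivity) _)
  rcases le_or_gt |x| (2 * |y|) with hcase | hcase
  · -- case |x| ≤ 2|y|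
    by_cases hy : y = 0
    · have hx0 : x = 0 := by
        have := abs_nonneg y
        have : |x| ≤ 0 := by rw [hy] at hcase; simpa using hcase
        exact abs_nonpos_iff.mp this
      subst hx0; subst hy
      simp [Real.zero_rpow (show s ≠ 0 by linarith)]
      positivity
    · have hy0 : (0:ℝ) < |y| := abs_pos.mpr hy
      have hys : (0:ℝ) < |y| ^ s := Real.rpow_pos_of_pos hy0 _
      -- bound |x+y|^s
      have h1 : |x + y| ^ s ≤ 3 ^ s * |y| ^ s := by
        calc |x + y| ^ s ≤ (3 * |y|) ^ s := by
              apply Real.rpow_le_rpow (abs_nonneg _) _ hs0.le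
              calc |x + y| ≤ |x| + |y| := abs_add_le _ _
                _ ≤ 3 * |y| := by linarith
          _ = 3 ^ s * |y| ^ s := Real.mul_rpow (by norm_num) (abs_nonneg _)
      -- bound the linear term
      have h2 : -(s * 2 ^ (s - 1) * |y| ^ s) ≤ s * |x| ^ (s - 2) * x * y := by
        by_cases hx : x = 0
        · subst hx
          have hpos : 0 < s * 2 ^ (s - 1) * |y| ^ s := mul_pos (mul_pos hs0 h2s) hys
          simp only [mul_zero, zero_mul]
          linarith
        · have hx0 : (0:ℝ) < |x| := abs_pos.mpr hx
          have e : |x| ^ (s - 2) * |x| = |x| ^ (s - 1) := by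
            rw [← Real.rpow_add_one (ne_of_gt hx0), show s - 2 + 1 = s - 1 from by ring]
          have hb : |x| ^ (s - 1) ≤ 2 ^ (s - 1) * |y| ^ (s - 1) := by
            calc |x| ^ (s - 1) ≤ (2 * |y|) ^ (s - 1) :=
                  Real.rpow_le_rpow hx0.le hcase hs1.le
              _ = 2 ^ (s - 1) * |y| ^ (s - 1) := Real.mul_rpow (by norm_num) (abs_nonneg _)
          have hy_e : |y| ^ (s - 1) * |y| = |y| ^ s := by
            rw [← Real.rpow_add_one (ne_of_gt hy0), show s - 1 + 1 = s from by ring]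
          have k1 : -(|x| * |y|) ≤ x * y := by
            rw [← abs_mul]; exact neg_abs_le _
          have k2 : 0 ≤ s * |x| ^ (s - 2) :=
            mul_nonneg hs0.le (Real.rpow_nonneg hx0.le _)
          have m1 : (s * |x| ^ (s - 2)) * (-(|x| * |y|)) ≤ (s * |x| ^ (s - 2)) * (x * y) :=
            mul_le_mul_of_nonneg_left k1 k2
          have m1' : -(s * |x| ^ (s - 1) * |y|) ≤ s * |x| ^ (s - 2) * x * y := by
            calc -(s * |x| ^ (s - 1) * |y|)
                = (s * |x| ^ (s - 2)) * (-(|x| * |y|)) := by rw [← e]; ring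
              _ ≤ (s * |x| ^ (s - 2)) * (x * y) := m1
              _ = s * |x| ^ (s - 2) * x * y := by ring
          have m4 : s * (|x| ^ (s - 1)) * |y| ≤ s * (2 ^ (s - 1) * |y| ^ (s - 1)) * |y| :=
            mul_le_mul_of_nonneg_right
              (mul_le_mul_of_nonneg_left hb hs0.le) (abs_nonneg y)
          have m5 : s * (2 ^ (s - 1) * |y| ^ (s - 1)) * |y| = s * 2 ^ (s - 1) * |y| ^ s := by
            rw [← hy_e]; ring
          linarith [m1', m4, m5]
      -- bound |y|^s by Q
      have h3 : |y| ^ s ≤ 3 ^ |s - 2| * Q := by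
        have hvpos : (0:ℝ) < |y| + |x| := by positivity
        have hcomp : |y| ^ (s - 2) ≤ 3 ^ |s - 2| * (|y| + |x|) ^ (s - 2) := by
          apply rpow_comparable (by norm_num) hy0 hvpos
          · nlinarith [abs_nonneg x]
          · linarith
        have e2 : |y| ^ s = y ^ 2 * |y| ^ (s - 2) := by
          rw [← sq_abs, ← Real.rpow_natCast |y| 2, ← Real.rpow_add hy0]
          norm_num
        calc |y| ^ s = y ^ 2 * |y| ^ (s - 2) := e2
          _ ≤ y ^ 2 * (3 ^ |s - 2| * (|y| + |x|) ^ (s - 2)) :=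
              mul_le_mul_of_nonneg_left hcomp (sq_nonneg y)
          _ = 3 ^ |s - 2| * Q := by rw [hQdef]; ring
      have h4 : (3 ^ s + s * 2 ^ (s - 1)) * |y| ^ s ≤
          (3 ^ s + s * 2 ^ (s - 1)) * (3 ^ |s - 2| * Q) :=
        mul_le_mul_of_nonneg_left h3 hsum.le
      have h6 : 0 ≤ s * (s - 1) * (3 ^ |s - 2| * Q) :=
        mul_nonneg (mul_nonneg hs0.le hs1.le) (mul_nonneg h3a.le hQ)
      have h7 : 0 ≤ |x| ^ s := Real.rpow_nonneg (abs_nonneg x) _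
      nlinarith [h1, h2, h4, h6, h7]
  · -- case 2|y| < |x|
    have hx0 : (0:ℝ) < |x| := lt_of_le_of_lt (by positivity) hcase
    have hx : x ≠ 0 := abs_pos.mp hx0
    set D : Set ℝ := Set.Icc (x - |y|) (x + |y|) with hDdef
    have hxD : x ∈ D := by
      constructor <;> [linarith [abs_nonneg y]; linarith [abs_nonneg y]]
    have hxyD : x + y ∈ D := by
      constructor <;> [linarith [neg_abs_le y]; linarith [le_abs_self y]]
    have hsub : ∀ u ∈ D, |u - x| ≤ |y| := by
      intro u hu
      exact abs_le.mpr ⟨by linarith [hu.1], by linarith [hu.2]⟩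
    have hulow : ∀ u ∈ D, |x| - |y| ≤ |u| := by
      intro u hu
      have := abs_sub_abs_le_abs_sub x u
      have h2 : |x - u| = |u - x| := abs_sub_comm _ _
      have := hsub u hu
      linarith [abs_sub_abs_le_abs_sub x u, (abs_sub_comm x u) ▸ hsub u hu]
    have huup : ∀ u ∈ D, |u| ≤ |x| + |y| := by
      intro u hu
      have h1 : |u| - |x| ≤ |u - x| := abs_sub_abs_le_abs_sub u x
      linarith [hsub u hu]
    have hupos : ∀ u ∈ D, (0:ℝ) < |u| := by
      intro u hu
      have := hulow u hu
      linarith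
    have hune : ∀ u ∈ D, u ≠ 0 := fun u hu => abs_pos.mp (hupos u hu)
    set M : ℝ := 3 ^ |s - 2| * (|y| + |x|) ^ (s - 2) with hMdef
    have hM0 : 0 ≤ M := mul_nonneg h3a.le (Real.rpow_nonneg (by positivity) _)
    have hM : ∀ u ∈ D, |u| ^ (s - 2) ≤ M := by
      intro u hu
      apply rpow_comparable (by norm_num) (hupos u hu) (by positivity)
      · linarith [huup u hu, abs_nonneg x, abs_nonneg y]
      · linarith [hulow u hu]
    -- Lipschitz bound for g(u) = |u|^(s-2) * u on D
    have hgl : ∀ u ∈ D,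
        |(|u| ^ (s - 2) * u) - (|x| ^ (s - 2) * x)| ≤ (s - 1) * M * |y| := by
      intro u hu
      have key := Convex.norm_image_sub_le_of_norm_hasDerivWithin_le
        (f := fun v : ℝ => |v| ^ (s - 2) * v)
        (f' := fun v : ℝ => (s - 1) * |v| ^ (s - 2)) (C := (s - 1) * M)
        (fun v hv => (hasDerivAt_abs_rpow_mul_self (hune v hv)).hasDerivWithinAt)
        (fun v hv => by
          rw [Real.norm_eq_abs, abs_of_nonneg
            (mul_nonneg hs1.le (Real.rpow_nonneg (abs_nonneg v) _))]
          exact mul_le_mul_of_nonneg_left (hM v hv) hs1.le)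
        (convex_Icc _ _) hxD hu
      rw [Real.norm_eq_abs, Real.norm_eq_abs] at key
      calc |(|u| ^ (s - 2) * u) - (|x| ^ (s - 2) * x)| ≤ (s - 1) * M * |u - x| := key
        _ ≤ (s - 1) * M * |y| :=
            mul_le_mul_of_nonneg_left (hsub u hu) (mul_nonneg hs1.le hM0)
    -- apply MVT to h(u) = |u|^s - s*|x|^(s-2)*x*u on D
    have hmain : |(|x + y| ^ s - s * |x| ^ (s - 2) * x * (x + y)) -
        (|x| ^ s - s * |x| ^ (s - 2) * x * x)| ≤ (s * ((s - 1) * M * |y|)) * |y| := by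
      have key := Convex.norm_image_sub_le_of_norm_hasDerivWithin_le
        (f := fun v : ℝ => |v| ^ s - s * |x| ^ (s - 2) * x * v)
        (f' := fun v : ℝ => s * |v| ^ (s - 2) * v - s * |x| ^ (s - 2) * x)
        (C := s * ((s - 1) * M * |y|))
        (fun v _ => by
          have hlin : HasDerivAt (fun w : ℝ => s * |x| ^ (s - 2) * x * w)
              (s * |x| ^ (s - 2) * x) v := by
            simpa using (hasDerivAt_id v).const_mul (s * |x| ^ (s - 2) * x)
          exact ((hasDerivAt_abs_rpow v hs).sub hlin).hasDerivWithinAt)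
        (fun v hv => by
          show ‖s * |v| ^ (s - 2) * v - s * |x| ^ (s - 2) * x‖ ≤ s * ((s - 1) * M * |y|)
          have e : s * |v| ^ (s - 2) * v - s * |x| ^ (s - 2) * x =
              s * ((|v| ^ (s - 2) * v) - (|x| ^ (s - 2) * x)) := by ring
          rw [Real.norm_eq_abs, e, abs_mul, abs_of_nonneg hs0.le]
          exact mul_le_mul_of_nonneg_left (hgl v hv) hs0.le)
        (convex_Icc _ _) hxD hxyD
      rw [Real.norm_eq_abs, Real.norm_eq_abs] at key
      simpa using key
    have hLHS : |x + y| ^ s - |x| ^ s - s * |x| ^ (s - 2) * x * y ≤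
        s * (s - 1) * M * y ^ 2 := by
      have h1 := (abs_le.mp hmain).2
      have e : (|x + y| ^ s - s * |x| ^ (s - 2) * x * (x + y)) -
          (|x| ^ s - s * |x| ^ (s - 2) * x * x) =
          |x + y| ^ s - |x| ^ s - s * |x| ^ (s - 2) * x * y := by ring
      rw [e] at h1
      have e2 : (s * ((s - 1) * M * |y|)) * |y| = s * (s - 1) * M * y ^ 2 := by
        rw [show y ^ 2 = |y| ^ 2 from (sq_abs y).symm]; ring
      nlinarith [h1, e2]
    have hfin : s * (s - 1) * M * y ^ 2 = s * (s - 1) * (3 ^ |s - 2| * Q) := by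
      rw [hMdef, hQdef]; ring
    have h8 : 0 ≤ (3 ^ s + s * 2 ^ (s - 1)) * (3 ^ |s - 2| * Q) :=
      mul_nonneg hsum.le (mul_nonneg h3a.le hQ)
    linarith [hLHS, hfin, h8]

/-- The weighted `s`-norm `|ξ|_{s,a} = (Σᵢ aᵢ|ξᵢ|^s)^{1/s}`. -/
noncomputable def wnorm {n : ℕ} (s : ℝ) (a : Fin n → ℝ) (ξ : Fin n → ℝ) : ℝ :=
  (∑ i, a i * |ξ i| ^ s) ^ ((1 : ℝ) / s)

/-- Upper bound for the Bregman distance of `|·|_{s,a}^p` when `1 < p < s` and `ξ ≠ 0`. -/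
theorem bregman_wnorm_upper (p s : ℝ) (hp : 1 < p) (hps : p < s) :
    ∃ C : ℝ, 0 < C ∧
      ∀ (n : ℕ) (a : Fin n → ℝ), (∀ i, 0 < a i) →
        ∀ ξ η : Fin n → ℝ, ξ ≠ 0 →
          wnorm s a (ξ + η) ^ p - wnorm s a ξ ^ p -
              p * wnorm s a ξ ^ (p - s) * ∑ i, a i * |ξ i| ^ (s - 2) * ξ i * η i ≤
            C * wnorm s a ξ ^ (p - s) *
              (∑ i, ((a i) ^ ((1 : ℝ) / s) * |η i|) ^ 2 *
                ((a i) ^ ((1 : ℝ) / s) * |η i| + (a i) ^ ((1 : ℝ) / s) * |ξ i|) ^ (s - 2)) := by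
  have hs1 : 1 < s := hp.trans hps
  have hs0 : (0:ℝ) < s := by linarith
  have hp0 : (0:ℝ) < p := by linarith
  obtain ⟨C₀, hC₀, hkey⟩ := scalar_key hs1
  refine ⟨p / s * C₀, mul_pos (div_pos hp0 hs0) hC₀, fun n a ha ξ η hξ => ?_⟩
  -- rewrite the right-hand sum into the convenient form
  have hRsum : (∑ i, ((a i) ^ ((1 : ℝ) / s) * |η i|) ^ 2 *
      ((a i) ^ ((1 : ℝ) / s) * |η i| + (a i) ^ ((1 : ℝ) / s) * |ξ i|) ^ (s - 2)) =
      ∑ i, a i * ((η i) ^ 2 * (|η i| + |ξ i|) ^ (s - 2)) := by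
    apply Finset.sum_congr rfl
    intro i _
    have hai : 0 < a i := ha i
    have h1s : (0:ℝ) < a i ^ ((1:ℝ)/s) := Real.rpow_pos_of_pos hai _
    have e1 : a i ^ ((1:ℝ)/s) * |η i| + a i ^ ((1:ℝ)/s) * |ξ i| =
        a i ^ ((1:ℝ)/s) * (|η i| + |ξ i|) := by ring
    rw [e1, Real.mul_rpow h1s.le (by positivity), mul_pow]
    have e2 : (a i ^ ((1:ℝ)/s)) ^ (2:ℕ) * (a i ^ ((1:ℝ)/s)) ^ (s - 2) = a i := by
      rw [← Real.rpow_natCast (a i ^ ((1:ℝ)/s)) 2, ← Real.rpow_add h1s,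
        show ((2:ℕ):ℝ) + (s - 2) = s from by push_cast; ring,
        ← Real.rpow_mul hai.le, one_div, inv_mul_cancel₀ (ne_of_gt hs0), Real.rpow_one]
    calc (a i ^ ((1:ℝ)/s)) ^ (2:ℕ) * |η i| ^ (2:ℕ) *
          ((a i ^ ((1:ℝ)/s)) ^ (s - 2) * (|η i| + |ξ i|) ^ (s - 2))
        = ((a i ^ ((1:ℝ)/s)) ^ (2:ℕ) * (a i ^ ((1:ℝ)/s)) ^ (s - 2)) *
          ((η i) ^ 2 * (|η i| + |ξ i|) ^ (s - 2)) := by rw [sq_abs]; ring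
      _ = a i * ((η i) ^ 2 * (|η i| + |ξ i|) ^ (s - 2)) := by rw [e2]
  rw [hRsum]
  set R : ℝ := ∑ i, a i * ((η i) ^ 2 * (|η i| + |ξ i|) ^ (s - 2)) with hRdef
  set T : ℝ := ∑ i, a i * |ξ i| ^ (s - 2) * ξ i * η i with hTdef
  set A : ℝ := wnorm s a (ξ + η) with hAdef
  set B : ℝ := wnorm s a ξ with hBdef
  -- basic positivity facts
  have hSB : (0:ℝ) < ∑ i, a i * |ξ i| ^ s := by
    obtain ⟨j, hj⟩ := Function.ne_iff.mp hξ
    have hj' : ξ j ≠ 0 := by simpa using hj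
    apply Finset.sum_pos'
    · exact fun i _ => mul_nonneg (ha i).le (Real.rpow_nonneg (abs_nonneg _) _)
    · exact ⟨j, Finset.mem_univ j,
        mul_pos (ha j) (Real.rpow_pos_of_pos (abs_pos.mpr hj') _)⟩
  have hSA : (0:ℝ) ≤ ∑ i, a i * |(ξ + η) i| ^ s :=
    Finset.sum_nonneg fun i _ => mul_nonneg (ha i).le (Real.rpow_nonneg (abs_nonneg _) _)
  have hB : (0:ℝ) < B := by
    rw [hBdef, wnorm]; exact Real.rpow_pos_of_pos hSB _
  have hA : (0:ℝ) ≤ A := by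
    rw [hAdef, wnorm]; exact Real.rpow_nonneg hSA _
  have hBs : B ^ s = ∑ i, a i * |ξ i| ^ s := by
    rw [hBdef, wnorm, ← Real.rpow_mul hSB.le, one_div, inv_mul_cancel₀ (ne_of_gt hs0),
      Real.rpow_one]
  have hAs : A ^ s = ∑ i, a i * |ξ i + η i| ^ s := by
    rw [hAdef, wnorm, ← Real.rpow_mul hSA, one_div, inv_mul_cancel₀ (ne_of_gt hs0),
      Real.rpow_one]
    simp [Pi.add_apply]
  have hBps : (0:ℝ) < B ^ (p - s) := Real.rpow_pos_of_pos hB _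
  -- Young's inequality step
  have key1 : A ^ p * B ^ (s - p) ≤ p / s * A ^ s + (1 - p / s) * B ^ s := by
    have hw1 : (0:ℝ) ≤ p / s := (div_pos hp0 hs0).le
    have hw2 : (0:ℝ) ≤ 1 - p / s := by
      have : p / s < 1 := (div_lt_one hs0).mpr hps
      linarith
    have hgm := Real.geom_mean_le_arith_mean2_weighted hw1 hw2
      (Real.rpow_nonneg hA s) (Real.rpow_nonneg hB.le s) (by ring)
    have e1 : (A ^ s) ^ (p / s) = A ^ p := by
      rw [← Real.rpow_mul hA, mul_div_cancel₀ p (ne_of_gt hs0)]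
    have e2 : (B ^ s) ^ (1 - p / s) = B ^ (s - p) := by
      rw [← Real.rpow_mul hB.le, show s * (1 - p / s) = s - p from by
        field_simp]
    rw [e1, e2] at hgm
    exact hgm
  have eB1 : B ^ (s - p) * B ^ (p - s) = 1 := by
    rw [← Real.rpow_add hB, show s - p + (p - s) = 0 from by ring, Real.rpow_zero]
  have eB2 : B ^ s * B ^ (p - s) = B ^ p := by
    rw [← Real.rpow_add hB, show s + (p - s) = p from by ring]
  have hYoung : A ^ p ≤ p / s * B ^ (p - s) * A ^ s + (1 - p / s) * B ^ p := by
    calc A ^ p = (A ^ p * B ^ (s - p)) * B ^ (p - s) := by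
          rw [mul_assoc, eB1, mul_one]
      _ ≤ (p / s * A ^ s + (1 - p / s) * B ^ s) * B ^ (p - s) :=
          mul_le_mul_of_nonneg_right key1 hBps.le
      _ = p / s * B ^ (p - s) * A ^ s + (1 - p / s) * (B ^ s * B ^ (p - s)) := by ring
      _ = p / s * B ^ (p - s) * A ^ s + (1 - p / s) * B ^ p := by rw [eB2]
  -- termwise scalar estimate
  have hsum_le : (∑ i, a i * |ξ i + η i| ^ s) - (∑ i, a i * |ξ i| ^ s) - s * T ≤ C₀ * R := by
    rw [hTdef, hRdef, Finset.mul_sum, Finset.mul_sum, ← Finset.sum_sub_distrib,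
      ← Finset.sum_sub_distrib]
    apply Finset.sum_le_sum
    intro i _
    calc a i * |ξ i + η i| ^ s - a i * |ξ i| ^ s - s * (a i * |ξ i| ^ (s - 2) * ξ i * η i)
        = a i * (|ξ i + η i| ^ s - |ξ i| ^ s - s * |ξ i| ^ (s - 2) * ξ i * η i) := by ring
      _ ≤ a i * (C₀ * ((η i) ^ 2 * (|η i| + |ξ i|) ^ (s - 2))) :=
          mul_le_mul_of_nonneg_left (hkey (ξ i) (η i)) (ha i).le
      _ = C₀ * (a i * ((η i) ^ 2 * (|η i| + |ξ i|) ^ (s - 2))) := by ring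
  have hT : A ^ s - B ^ s - s * T ≤ C₀ * R := by
    rw [hAs, hBs]; linarith [hsum_le]
  have hmul : p / s * B ^ (p - s) * (A ^ s - B ^ s - s * T) ≤
      p / s * B ^ (p - s) * (C₀ * R) :=
    mul_le_mul_of_nonneg_left hT (by positivity)
  have efin : p / s * B ^ (p - s) * (A ^ s - B ^ s - s * T) =
      p / s * B ^ (p - s) * A ^ s + (1 - p / s) * B ^ p - B ^ p - p * B ^ (p - s) * T := by
    have hps' : p / s * s = p := div_mul_cancel₀ p (ne_of_gt hs0)
    calc p / s * B ^ (p - s) * (A ^ s - B ^ s - s * T)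
        = p / s * B ^ (p - s) * A ^ s - p / s * (B ^ s * B ^ (p - s)) -
          (p / s * s) * (B ^ (p - s) * T) := by ring
      _ = p / s * B ^ (p - s) * A ^ s - p / s * B ^ p - p * (B ^ (p - s) * T) := by
          rw [eB2, hps']
      _ = p / s * B ^ (p - s) * A ^ s + (1 - p / s) * B ^ p - B ^ p - p * B ^ (p - s) * T := by
          ring
  have elast : p / s * B ^ (p - s) * (C₀ * R) = p / s * C₀ * B ^ (p - s) * R := by ring
  linarith [hYoung, hmul, efin, elast]
end
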